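/- Let G be a finite strongly connected digraph with protector labeling f satisfying: (A1) every cycle contains a seller-protected arc; (A2) unique external protector per vertex; (A3) in/out protector matching per vertex; and the path-propagation properties (every simple path from b protected-at-the-end by b is entirely b-protected, and symmetrically). Fix a protector vertex b and let G_b be the subgraph induced by the arcs protected by b. Then G_b is strongly connected and every directed cycle of G_b contains b; i.e., G_b is a bottleneck digraph with bottleneck b. -/

import Mathlib

/-!
Every closed walk of `G_b` contains a cycle, which by (A1) has an arc `a` with `f a = a.1`;
since `f a = b` on `G_b`, that cycle passes through `b`. By (A3) every walk in `G_b` can be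
extended forwards (and backwards) indefinitely, so a long enough walk out of (into) any vertex of
`G_b` repeats a vertex, closes up, and therefore meets `b`. Hence every vertex of `G_b` reaches
`b` and is reached from `b`.
-/

/-- The list of arcs (consecutive pairs) of a path given as a list of vertices. -/
def arcsOf {V : Type*} (p : List V) : List (V × V) := p.zip p.tail

/-- A directed cycle: a closed directed walk of length ≥ 1 with no repeated arcs. -/
def IsCycle {V : Type*} (A : Finset (V × V)) (p : List V) : Prop :=
  p.Chain' (fun u v => (u, v) ∈ A) ∧ 2 ≤ p.length ∧ p.head? = p.getLast? ∧ (arcsOf p).Nodup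

/-- Lengths of simple directed paths from `s` to `t`. -/
def SimplePathLens {V : Type*} (A : Finset (V × V)) (s t : V) : Set ℕ :=
  {n | ∃ p : List V, p.Chain' (fun u v => (u, v) ∈ A) ∧ p.Nodup ∧
        p.head? = some s ∧ p.getLast? = some t ∧ p.length = n + 1}

open Relation

namespace List

variable {α : Type*}

theorem exists_cons_append_singleton_infix_of_not_nodup {l : List α} (h : ¬l.Nodup) :
    ∃ x l', x :: l' ++ [x] <:+: l := by
  induction l with
  | nil => exact absurd nodup_nil h
  | cons a t ih =>
    by_cases ha : a ∈ t
    · obtain ⟨s, r, rfl⟩ := append_of_mem ha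
      exact ⟨a, s, [], r, by simp⟩
    · obtain ⟨x, l', hinf⟩ := ih fun hn => h (nodup_cons.mpr ⟨ha, hn⟩)
      exact ⟨x, l', hinf.trans (suffix_cons a t).isInfix⟩

theorem head?_eq_getLast?_cons_append_singleton (x : α) (l : List α) :
    (x :: l ++ [x]).head? = (x :: l ++ [x]).getLast? := by
  rw [getLast?_concat]; rfl

theorem exists_infix_dropLast_nodup_of_head?_eq_getLast? {l : List α} (hlen : 2 ≤ l.length)
    (hcl : l.head? = l.getLast?) :
    ∃ c, c <:+: l ∧ 2 ≤ c.length ∧ c.head? = c.getLast? ∧ c.dropLast.Nodup := by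
  induction hn : l.length using Nat.strong_induction_on generalizing l with
  | _ n ih =>
    by_cases hnd : l.dropLast.Nodup
    · exact ⟨l, infix_refl l, hlen, hcl, hnd⟩
    obtain ⟨x, l', hinf⟩ := exists_cons_append_singleton_infix_of_not_nodup hnd
    have hinf' := hinf.trans l.dropLast_prefix.isInfix
    have hshorter : (x :: l' ++ [x]).length < n := by
      have := hinf.length_le
      simp only [length_dropLast] at this
      omega
    obtain ⟨c, hc, hrest⟩ :=
      ih _ hshorter (by simp) (head?_eq_getLast?_cons_append_singleton x l') rfl
    exact ⟨c, hc.trans hinf', hrest⟩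

end List

section Arcs

variable {V : Type*}

@[simp]
theorem arcsOf_cons_cons (a c : V) (t : List V) :
    arcsOf (a :: c :: t) = (a, c) :: arcsOf (c :: t) := rfl

theorem map_fst_arcsOf (p : List V) : (arcsOf p).map Prod.fst = p.dropLast := by
  induction p with
  | nil => rfl
  | cons x t ih =>
    cases t with
    | nil => rfl
    | cons y s => simp [ih]

theorem List.IsChain.rel_of_mem_arcsOf {R : V → V → Prop} {p : List V} (h : p.IsChain R)
    {a : V × V} (ha : a ∈ arcsOf p) : R a.1 a.2 := by
  induction p with
  | nil => simp [arcsOf] at ha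
  | cons x t ih =>
    cases t with
    | nil => simp [arcsOf] at ha
    | cons y s =>
      rw [List.isChain_cons_cons] at h
      rcases List.mem_cons.mp ha with rfl | ha
      · exact h.1
      · exact ih h.2 ha

end Arcs

section Bottleneck

variable {V : Type*}

def IsClosedWalk (R : V → V → Prop) (p : List V) : Prop :=
  p.IsChain R ∧ 2 ≤ p.length ∧ p.head? = p.getLast?

def IsBottleneck (R : V → V → Prop) (b : V) : Prop :=
  ∀ p, IsClosedWalk R p → b ∈ p

theorem isClosedWalk_cons_append_singleton {R : V → V → Prop} {x : V} {l : List V}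
    (h : (x :: l ++ [x]).IsChain R) : IsClosedWalk R (x :: l ++ [x]) :=
  ⟨h, by simp, List.head?_eq_getLast?_cons_append_singleton x l⟩

theorem IsClosedWalk.reverse {R : V → V → Prop} {p : List V} (h : IsClosedWalk R p) :
    IsClosedWalk (Function.swap R) p.reverse :=
  ⟨List.isChain_reverse.mpr h.1, by simpa using h.2.1, by simp [h.2.2]⟩

theorem IsBottleneck.swap {R : V → V → Prop} {b : V} (h : IsBottleneck R b) :
    IsBottleneck (Function.swap R) b := fun p hp =>
  List.mem_reverse.mp (h p.reverse (by simpa using hp.reverse))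

theorem exists_isChain_cons_length {R : V → V → Prop} (hext : ∀ u v, R u v → ∃ w, R v w)
    (n : ℕ) {v : V} (hv : ∃ w, R v w) : ∃ p, (v :: p).IsChain R ∧ p.length = n := by
  induction n generalizing v with
  | zero => exact ⟨[], List.isChain_singleton v, rfl⟩
  | succ n ih =>
    obtain ⟨w, hvw⟩ := hv
    obtain ⟨p, hp, hlen⟩ := ih (hext v w hvw)
    exact ⟨w :: p, List.IsChain.cons_cons hvw hp, by simp [hlen]⟩

variable [Fintype V]

theorem IsBottleneck.reflTransGen_to_of_exists_rel {R : V → V → Prop} {b : V}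
    (hb : IsBottleneck R b) (hext : ∀ u v, R u v → ∃ w, R v w) {v : V} (hv : ∃ w, R v w) :
    ReflTransGen R v b := by
  obtain ⟨p, hch, hlen⟩ := exists_isChain_cons_length hext (Fintype.card V) hv
  have hnd : ¬(v :: p).Nodup := fun h => by simpa [hlen] using h.length_le_card
  obtain ⟨x, l, hinf⟩ := List.exists_cons_append_singleton_infix_of_not_nodup hnd
  have hbp := hinf.subset (hb _ (isClosedWalk_cons_append_singleton (hch.infix hinf)))
  exact hch.induction (ReflTransGen R v) _ (fun _ _ hxy hx => hx.tail hxy)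
    (fun _ => ReflTransGen.refl) b hbp

theorem IsBottleneck.reflTransGen_from_of_exists_rel {R : V → V → Prop} {b : V}
    (hb : IsBottleneck R b) (hext : ∀ u v, R u v → ∃ w, R w u) {v : V} (hv : ∃ u, R u v) :
    ReflTransGen R b v :=
  reflTransGen_swap.mp (hb.swap.reflTransGen_to_of_exists_rel (fun u v h => hext v u h) hv)

end Bottleneck

section Protector

variable {V : Type*} {A : Finset (V × V)} {f : V × V → V}

/-- The arc relation of `G_b`. -/
def protectedArc (A : Finset (V × V)) (f : V × V → V) (b s t : V) : Prop :=
  (s, t) ∈ A ∧ f (s, t) = b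

theorem isBottleneck_protectedArc (hA1 : ∀ p : List V, IsCycle A p → ∃ a ∈ arcsOf p, f a = a.1)
    (b : V) : IsBottleneck (protectedArc A f b) b := by
  intro p ⟨hch, hlen, hcl⟩
  obtain ⟨c, hcp, hclen, hccl, hcnd⟩ :=
    List.exists_infix_dropLast_nodup_of_head?_eq_getLast? hlen hcl
  have hcch := hch.infix hcp
  have hcyc : IsCycle A c :=
    ⟨hcch.imp fun _ _ h => h.1, hclen, hccl, (map_fst_arcsOf c ▸ hcnd).of_map _⟩
  obtain ⟨a, ha, hfa⟩ := hA1 c hcyc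
  have hab : a.1 = b := hfa.symm.trans (hcch.rel_of_mem_arcsOf ha).2
  exact hcp.subset (hab ▸ (List.of_mem_zip ha).1)

theorem exists_protectedArc_out
    (hA3 : ∀ v x : V, (∃ u, protectedArc A f x u v) ↔ ∃ w, protectedArc A f x v w)
    {b u : V} (hu : ∃ a ∈ A, f a = b ∧ (a.1 = u ∨ a.2 = u)) :
    ∃ w, protectedArc A f b u w := by
  obtain ⟨⟨s, t⟩, ha, hfa, rfl | rfl⟩ := hu
  · exact ⟨t, ha, hfa⟩
  · exact (hA3 _ b).mp ⟨s, ha, hfa⟩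

theorem exists_protectedArc_in
    (hA3 : ∀ v x : V, (∃ u, protectedArc A f x u v) ↔ ∃ w, protectedArc A f x v w)
    {b v : V} (hv : ∃ a ∈ A, f a = b ∧ (a.1 = v ∨ a.2 = v)) :
    ∃ u, protectedArc A f b u v := by
  obtain ⟨⟨s, t⟩, ha, hfa, rfl | rfl⟩ := hv
  · exact (hA3 _ b).mpr ⟨t, ha, hfa⟩
  · exact ⟨s, ha, hfa⟩

end Protector

theorem stmt19_general {V : Type*} [Fintype V] (A : Finset (V × V)) (f : V × V → V)
    (hA1 : ∀ p : List V, IsCycle A p → ∃ a ∈ arcsOf p, f a = a.1)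
    (hA3 : ∀ v x : V,
      (∃ u, (u, v) ∈ A ∧ f (u, v) = x) ↔ (∃ w, (v, w) ∈ A ∧ f (v, w) = x))
    (b : V) :
    (∀ u v : V,
      (∃ a ∈ A, f a = b ∧ (a.1 = u ∨ a.2 = u)) →
      (∃ a ∈ A, f a = b ∧ (a.1 = v ∨ a.2 = v)) →
      Relation.ReflTransGen (fun s t => (s, t) ∈ A ∧ f (s, t) = b) u v) ∧
    (∀ p : List V, p.Chain' (fun s t => (s, t) ∈ A ∧ f (s, t) = b) →
      2 ≤ p.length → p.head? = p.getLast? → b ∈ p) := by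
  have hbot := isBottleneck_protectedArc hA1 b
  have hout : ∀ u v, protectedArc A f b u v → ∃ w, protectedArc A f b v w :=
    fun u v h => (hA3 v b).mp ⟨u, h⟩
  have hin : ∀ u v, protectedArc A f b u v → ∃ w, protectedArc A f b w u :=
    fun u v h => (hA3 u b).mpr ⟨v, h⟩
  refine ⟨fun u v hu hv => ?_, fun p hch hlen hcl => hbot p ⟨hch, hlen, hcl⟩⟩
  exact (hbot.reflTransGen_to_of_exists_rel hout (exists_protectedArc_out hA3 hu)).trans
    (hbot.reflTransGen_from_of_exists_rel hin (exists_protectedArc_in hA3 hv))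

/-- Each component G_b of the protector decomposition is a strongly connected bottleneck
digraph with bottleneck b. -/
theorem stmt19 {V : Type*} [Fintype V] (A : Finset (V × V)) (f : V × V → V)
    (hsc : ∀ u v : V, Relation.ReflTransGen (fun a b => (a, b) ∈ A) u v)
    (hA1 : ∀ p : List V, IsCycle A p → ∃ a ∈ arcsOf p, f a = a.1)
    (hA2 : ∀ v x : V, x ≠ v → (∃ u, (u, v) ∈ A ∧ f (u, v) = x) →
      ∀ a ∈ A, (a.1 = v ∨ a.2 = v) → (f a = v ∨ f a = x))
    (hA3 : ∀ v x : V,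
      (∃ u, (u, v) ∈ A ∧ f (u, v) = x) ↔ (∃ w, (v, w) ∈ A ∧ f (v, w) = x))
    (hprop1 : ∀ x : V, ∀ p : List V, p.Chain' (fun a b => (a, b) ∈ A) → p.Nodup →
      p.head? = some x → (∀ a : V × V, (arcsOf p).getLast? = some a → f a = x) →
      ∀ b ∈ arcsOf p, f b = x)
    (hprop2 : ∀ x : V, ∀ p : List V, p.Chain' (fun a b => (a, b) ∈ A) → p.Nodup →
      p.getLast? = some x → (∀ a : V × V, (arcsOf p).head? = some a → f a = x) →
      ∀ b ∈ arcsOf p, f b = x)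
    (b : V) (hb : ∃ a ∈ A, f a = b) :
    (∀ u v : V,
      (∃ a ∈ A, f a = b ∧ (a.1 = u ∨ a.2 = u)) →
      (∃ a ∈ A, f a = b ∧ (a.1 = v ∨ a.2 = v)) →
      Relation.ReflTransGen (fun s t => (s, t) ∈ A ∧ f (s, t) = b) u v) ∧
    (∀ p : List V, p.Chain' (fun s t => (s, t) ∈ A ∧ f (s, t) = b) →
      2 ≤ p.length → p.head? = p.getLast? → b ∈ p) :=
  stmt19_general A f hA1 hA3 b
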